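/- arXiv:2207.04207 — 3 statements merged into one kernel-verified Lean document; each statement's English description precedes it below -/
import Mathlib

section
/- Let N ≥ 1 and M ≥ 1 be integers and let β ∈ (0,1). There exists a constant C > 0, depending only on N and β, such that for every measurable map f : S^N → ℝ^M one has [f]_{BMO(S^N)} ≤ C · [f]_{W^{β,N/β}(S^N)} (the inequality understood in [0,∞]). -/
/-!
On a cap `A = S^N ∩ B(x, r)`, Jensen's inequality (applied twice) bounds the double average of
`|f θ - f σ|` by the `p`-th root of the double average of `|f θ - f σ| ^ p`, where `p = N / β`.
Points of `A` are at distance at most `2 min(r, 1)` from each other, and `A` has measure at least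
`(min(r, 1) / √N) ^ N` because its orthogonal projection onto the tangent plane at `x` contains an
`N`-ball of radius `min(r, 1) / 2`. Hence on `A × A` the kernel `|θ - σ| ^ (-(N + β p))`, which is
`|θ - σ| ^ (-2 N)` for the critical exponent `β p = N`, is at least `(4 N) ^ (-N) |A| ^ (-2)`,
uniformly in `r`.
-/

open MeasureTheory Metric Set ENNReal

noncomputable section

/-- The unit sphere `S^N ⊆ ℝ^{N+1}`. -/
def sphN (N : ℕ) : Set (EuclideanSpace ℝ (Fin (N + 1))) := Metric.sphere 0 1

/-- The `N`-dimensional surface (Hausdorff) measure on `ℝ^{N+1}`. -/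
def surf (N : ℕ) : Measure (EuclideanSpace ℝ (Fin (N + 1))) := μH[(N : ℝ)]

/-- The BMO seminorm of `f : S^N → ℝ^M`. -/
def bmoSem (N M : ℕ) (f : EuclideanSpace ℝ (Fin (N + 1)) → EuclideanSpace ℝ (Fin M)) : ℝ≥0∞ :=
  ⨆ (x : EuclideanSpace ℝ (Fin (N + 1))) (_ : x ∈ sphN N) (r : ℝ) (_ : 0 < r),
    ⨍⁻ θ in sphN N ∩ Metric.ball x r,
      (⨍⁻ σ in sphN N ∩ Metric.ball x r, ENNReal.ofReal ‖f θ - f σ‖ ∂(surf N)) ∂(surf N)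

/-- The Gagliardo seminorm `[f]_{W^{β,p}(S^N)}`, with values in `[0,∞]`. -/
def gagliardoS (N M : ℕ) (β p : ℝ)
    (f : EuclideanSpace ℝ (Fin (N + 1)) → EuclideanSpace ℝ (Fin M)) : ℝ≥0∞ :=
  (∫⁻ x in sphN N, ∫⁻ y in sphN N,
      ENNReal.ofReal ‖f x - f y‖ ^ p / ENNReal.ofReal (dist x y ^ ((N : ℝ) + β * p))
        ∂(surf N) ∂(surf N)) ^ (1 / p)

open Module

theorem lintegral_le_rpow_lintegral_rpow_mul_measure_univ {α : Type*} [MeasurableSpace α]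
    (μ : Measure α) (f : α → ℝ≥0∞) {p : ℝ} (hp : 1 < p) :
    ∫⁻ a, f a ∂μ ≤ (∫⁻ a, f a ^ p ∂μ) ^ (1 / p) * μ univ ^ (1 - 1 / p) := by
  -- Hölder needs measurability; a measurable minorant with the same integral supplies it.
  obtain ⟨g, hg, hgf, hfg⟩ := exists_measurable_le_lintegral_eq μ f
  have hpq : p.HolderConjugate (p / (p - 1)) := .conjExponent hp
  calc ∫⁻ a, f a ∂μ = ∫⁻ a, (g * 1) a ∂μ := by simp [hfg]
    _ ≤ (∫⁻ a, g a ^ p ∂μ) ^ (1 / p) * (∫⁻ _, 1 ^ (p / (p - 1)) ∂μ) ^ (1 / (p / (p - 1))) :=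
      ENNReal.lintegral_mul_le_Lp_mul_Lq μ hpq hg.aemeasurable aemeasurable_const
    _ ≤ (∫⁻ a, f a ^ p ∂μ) ^ (1 / p) * μ univ ^ (1 - 1 / p) := by
      have hq : 1 / (p / (p - 1)) = 1 - 1 / p := by field_simp
      rw [hq]
      gcongr ?_ ^ _ * ?_
      · exact lintegral_mono fun a => ENNReal.rpow_le_rpow (hgf a) (by linarith)
      · simp

theorem laverage_le_rpow_laverage_rpow {α : Type*} [MeasurableSpace α] (μ : Measure α)
    (f : α → ℝ≥0∞) {p : ℝ} (hp : 1 ≤ p) :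
    ⨍⁻ a, f a ∂μ ≤ (⨍⁻ a, f a ^ p ∂μ) ^ (1 / p) := by
  obtain rfl | hp := hp.eq_or_lt
  · simp
  rw [laverage_eq, laverage_eq]
  rcases eq_or_ne (μ univ) 0 with h0 | h0
  · simp [Measure.measure_univ_eq_zero.mp h0]
  rcases eq_or_ne (μ univ) ∞ with htop | htop
  · simp [htop]
  calc (∫⁻ a, f a ∂μ) / μ univ
      ≤ (∫⁻ a, f a ^ p ∂μ) ^ (1 / p) * μ univ ^ (1 - 1 / p) / μ univ := by
        gcongr
        exact lintegral_le_rpow_lintegral_rpow_mul_measure_univ μ f hp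
    _ = ((∫⁻ a, f a ^ p ∂μ) / μ univ) ^ (1 / p) := by
        rw [ENNReal.div_rpow_of_nonneg _ _ (by positivity), div_eq_mul_inv (b := _ ^ _),
          mul_div_assoc, ← ENNReal.rpow_neg, show -(1 / p) = 1 - 1 / p - 1 by ring,
          ENNReal.rpow_sub (1 - 1 / p) 1 h0 htop, ENNReal.rpow_one]

theorem laverage_laverage_le_rpow_laverage_laverage_rpow {α β : Type*} [MeasurableSpace α]
    [MeasurableSpace β] (μ : Measure α) (ν : Measure β) (g : α → β → ℝ≥0∞) {p : ℝ}
    (hp : 1 ≤ p) :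
    ⨍⁻ x, ⨍⁻ y, g x y ∂ν ∂μ ≤ (⨍⁻ x, ⨍⁻ y, g x y ^ p ∂ν ∂μ) ^ (1 / p) := by
  have hp0 : 0 < p := by linarith
  calc ⨍⁻ x, ⨍⁻ y, g x y ∂ν ∂μ ≤ (⨍⁻ x, (⨍⁻ y, g x y ∂ν) ^ p ∂μ) ^ (1 / p) :=
        laverage_le_rpow_laverage_rpow μ _ hp
    _ ≤ (⨍⁻ x, ⨍⁻ y, g x y ^ p ∂ν ∂μ) ^ (1 / p) := by
        refine ENNReal.rpow_le_rpow (laverage_mono_ae (.of_forall fun x => ?_)) (by positivity)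
        calc (⨍⁻ y, g x y ∂ν) ^ p ≤ ((⨍⁻ y, g x y ^ p ∂ν) ^ (1 / p)) ^ p := by
              gcongr; exact laverage_le_rpow_laverage_rpow ν _ hp
          _ = ⨍⁻ y, g x y ^ p ∂ν := by
              rw [← ENNReal.rpow_mul, one_div_mul_cancel hp0.ne', ENNReal.rpow_one]

theorem setLAverage_setLAverage_le_of_dist_le {α : Type*} [PseudoMetricSpace α]
    [MeasurableSpace α] (μ : Measure α) {A S : Set α} (hA : MeasurableSet A) (hAS : A ⊆ S)
    {D e : ℝ} (hD : 0 < D) (he : 0 ≤ e) (hdiam : ∀ θ ∈ A, ∀ σ ∈ A, dist θ σ ≤ D)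
    (h : α → α → ℝ≥0∞) :
    ⨍⁻ θ in A, ⨍⁻ σ in A, h θ σ ∂μ ∂μ ≤ ENNReal.ofReal (D ^ e) / μ A ^ 2 *
      ∫⁻ θ in S, ∫⁻ σ in S, h θ σ / ENNReal.ofReal (dist θ σ ^ e) ∂μ ∂μ := by
  set c := ENNReal.ofReal (D ^ e)
  set k := fun θ σ => h θ σ / ENNReal.ofReal (dist θ σ ^ e)
  rcases eq_or_ne (μ A) 0 with hA0 | hA0
  · simp [Measure.restrict_eq_zero.mpr hA0]
  have hc0 : c ≠ 0 := by simpa [c] using Real.rpow_pos_of_pos hD e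
  have hinner (θ : α) (hθ : θ ∈ A) : ∫⁻ σ in A, h θ σ ∂μ ≤ c * ∫⁻ σ in S, k θ σ ∂μ :=
    calc ∫⁻ σ in A, h θ σ ∂μ ≤ ∫⁻ σ in A, c * k θ σ ∂μ := by
          refine setLIntegral_mono' hA fun σ hσ => ?_
          calc h θ σ = c * (h θ σ / c) := (ENNReal.mul_div_cancel hc0 ofReal_ne_top).symm
            _ ≤ c * k θ σ := by
              gcongr
              exact ENNReal.div_le_div_left
                (ofReal_le_ofReal (Real.rpow_le_rpow dist_nonneg (hdiam θ hθ σ hσ) he)) _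
      _ ≤ ∫⁻ σ in S, c * k θ σ ∂μ := lintegral_mono_set hAS
      _ = c * ∫⁻ σ in S, k θ σ ∂μ := lintegral_const_mul' _ _ ofReal_ne_top
  calc ⨍⁻ θ in A, ⨍⁻ σ in A, h θ σ ∂μ ∂μ
      = (∫⁻ θ in A, (∫⁻ σ in A, h θ σ ∂μ) / μ A ∂μ) / μ A := by simp only [setLAverage_eq]
    _ ≤ (∫⁻ θ in A, c / μ A * ∫⁻ σ in S, k θ σ ∂μ ∂μ) / μ A := by
        gcongr ?_ / _
        refine setLIntegral_mono' hA fun θ hθ => ?_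
        rw [← ENNReal.mul_div_right_comm]
        gcongr
        exact hinner θ hθ
    _ ≤ (∫⁻ θ in S, c / μ A * ∫⁻ σ in S, k θ σ ∂μ ∂μ) / μ A := by
        gcongr ?_ / _
        exact lintegral_mono_set hAS
    _ = c / μ A ^ 2 * ∫⁻ θ in S, ∫⁻ σ in S, k θ σ ∂μ ∂μ := by
        rw [lintegral_const_mul' _ _ (ENNReal.div_ne_top ofReal_ne_top hA0), div_eq_mul_inv,
          div_eq_mul_inv, div_eq_mul_inv, pow_two, ENNReal.mul_inv (.inl hA0) (.inr hA0)]
        ring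

section InnerProductSpace

variable {E : Type*} [NormedAddCommGroup E] [InnerProductSpace ℝ E]

theorem ofReal_le_hausdorffMeasure_ball [FiniteDimensional ℝ E] [MeasurableSpace E]
    [BorelSpace E] (hE : 0 < finrank ℝ E) {ρ : ℝ} (hρ : 0 < ρ) :
    ENNReal.ofReal ((2 * ρ / √(finrank ℝ E)) ^ finrank ℝ E) ≤
      μH[finrank ℝ E] (ball (0 : E) ρ) := by
  -- On `Fin n → ℝ` (sup metric) `μH[n]` is Lebesgue measure, so compare with a cube.
  set n := finrank ℝ E
  set φ := (stdOrthonormalBasis ℝ E).repr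
  set ψ : E → Fin n → ℝ := fun v => WithLp.ofLp (φ v)
  have hψ : LipschitzWith 1 ψ := by
    simpa [ψ, Function.comp_def] using (PiLp.lipschitzWith_ofLp 2 _).comp φ.isometry.lipschitz
  have hcube : ball (0 : Fin n → ℝ) (ρ / √n) ⊆ ψ '' ball 0 ρ := by
    intro z hz
    refine ⟨φ.symm (WithLp.toLp 2 z), ?_, by simp [ψ]⟩
    have hlip := (PiLp.lipschitzWith_toLp 2 (fun _ : Fin n => ℝ)).dist_le_mul z 0
    have hK : (((Fintype.card (Fin n) : NNReal) ^ (1 / (2 : ℝ≥0∞)).toReal : NNReal) : ℝ) = √n := by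
      rw [NNReal.coe_rpow, NNReal.coe_natCast, Fintype.card_fin, Real.sqrt_eq_rpow]
      norm_num
    rw [hK] at hlip
    rw [mem_ball] at hz
    rw [mem_ball_zero_iff, LinearIsometryEquiv.norm_map, ← dist_zero_right]
    calc dist (WithLp.toLp 2 z) 0 ≤ √n * dist z 0 := by simpa using hlip
      _ < √n * (ρ / √n) := by gcongr
      _ = ρ := by field_simp
  calc ENNReal.ofReal ((2 * ρ / √n) ^ n) = μH[n] (ball (0 : Fin n → ℝ) (ρ / √n)) := by
        have hpi := hausdorffMeasure_pi_real (ι := Fin n)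
        rw [Fintype.card_fin] at hpi
        rw [hpi, Real.volume_pi_ball _ (by positivity), Fintype.card_fin, mul_div_assoc]
    _ ≤ μH[n] (ψ '' ball 0 ρ) := measure_mono hcube
    _ ≤ μH[n] (ball (0 : E) ρ) := by
        simpa using hψ.hausdorffMeasure_image_le (Nat.cast_nonneg n) (ball (0 : E) ρ)

theorem ball_subset_orthogonalProjectionOnto_image_sphere_inter_ball {x : E} (hx : ‖x‖ = 1)
    {r : ℝ} (hr : r ≤ 1) :
    ball (0 : (ℝ ∙ x)ᗮ) (r / 2) ⊆
      (ℝ ∙ x)ᗮ.orthogonalProjectionOnto '' (sphere (0 : E) 1 ∩ ball x r) := by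
  intro v hv
  set w : E := (v : E)
  have hw : ‖w‖ < r / 2 := mem_ball_zero_iff.mp hv
  have hxw : inner ℝ x w = 0 := Submodule.mem_orthogonal_singleton_iff_inner_right.mp v.2
  set t := √(1 - ‖w‖ ^ 2)
  have ht2 : t ^ 2 = 1 - ‖w‖ ^ 2 := Real.sq_sqrt (by nlinarith [norm_nonneg w])
  have ht0 : 0 ≤ t := Real.sqrt_nonneg _
  have hnorm_sq (c : ℝ) : ‖w + c • x‖ ^ 2 = ‖w‖ ^ 2 + c ^ 2 := by
    rw [norm_add_sq_real, real_inner_smul_right, real_inner_comm, hxw, norm_smul, hx]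
    simp
  refine ⟨w + t • x, ⟨?_, ?_⟩, ?_⟩
  · rw [mem_sphere_zero_iff_norm, ← pow_eq_one_iff_of_nonneg (norm_nonneg _) two_ne_zero,
      hnorm_sq, ht2]
    ring
  · -- `1 - t ≤ 1 - t ^ 2 = ‖w‖ ^ 2`, so the lifted point is within `√2 ‖w‖ < r` of `x`.
    have hsq : ‖w + (t - 1) • x‖ ^ 2 < r ^ 2 := by
      rw [hnorm_sq]
      nlinarith [norm_nonneg w]
    rw [mem_ball_iff_norm, show w + t • x - x = w + (t - 1) • x by module]
    exact lt_of_pow_lt_pow_left₀ 2 (by linarith [norm_nonneg w]) hsq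
  · have hxK : x ∈ (ℝ ∙ x)ᗮᗮ :=
      Submodule.le_orthogonal_orthogonal _ (Submodule.mem_span_singleton_self x)
    rw [map_add, map_smul, Submodule.orthogonalProjectionOnto_mem_subspace_eq_self,
      Submodule.orthogonalProjectionOnto_apply_of_mem_orthogonal hxK, smul_zero, add_zero]

theorem ofReal_le_hausdorffMeasure_sphere_inter_ball [FiniteDimensional ℝ E]
    [MeasurableSpace E] [BorelSpace E] {N : ℕ} (hN : 1 ≤ N) (hE : finrank ℝ E = N + 1) {x : E}
    (hx : ‖x‖ = 1) {r : ℝ} (hr0 : 0 < r) (hr1 : r ≤ 1) :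
    ENNReal.ofReal ((r / √N) ^ N) ≤ μH[N] (sphere (0 : E) 1 ∩ ball x r) := by
  have hK : finrank ℝ (ℝ ∙ x)ᗮ = N := by
    have := Submodule.finrank_add_finrank_orthogonal (ℝ ∙ x)
    rw [finrank_span_singleton (norm_ne_zero_iff.mp (by simp [hx]))] at this
    omega
  calc ENNReal.ofReal ((r / √N) ^ N)
      = ENNReal.ofReal ((2 * (r / 2) / √(finrank ℝ (ℝ ∙ x)ᗮ)) ^ finrank ℝ (ℝ ∙ x)ᗮ) := by
        rw [hK, mul_div_cancel₀ _ two_ne_zero]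
    _ ≤ μH[finrank ℝ (ℝ ∙ x)ᗮ] (ball (0 : (ℝ ∙ x)ᗮ) (r / 2)) :=
        ofReal_le_hausdorffMeasure_ball (by omega) (half_pos hr0)
    _ ≤ μH[N] ((ℝ ∙ x)ᗮ.orthogonalProjectionOnto '' (sphere (0 : E) 1 ∩ ball x r)) := by
        rw [hK]
        exact measure_mono (ball_subset_orthogonalProjectionOnto_image_sphere_inter_ball hx hr1)
    _ ≤ μH[N] (sphere (0 : E) 1 ∩ ball x r) := by
        simpa using (ℝ ∙ x)ᗮ.lipschitzWith_orthogonalProjectionOnto.hausdorffMeasure_image_le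
          (Nat.cast_nonneg N) (sphere (0 : E) 1 ∩ ball x r)

end InnerProductSpace

theorem ofReal_le_surf_sphN_inter_ball {N : ℕ} (hN : 1 ≤ N)
    {x : EuclideanSpace ℝ (Fin (N + 1))} (hx : x ∈ sphN N) {r : ℝ} (hr : 0 < r) :
    ENNReal.ofReal ((min r 1 / √N) ^ N) ≤ surf N (sphN N ∩ ball x r) :=
  (ofReal_le_hausdorffMeasure_sphere_inter_ball hN finrank_euclideanSpace_fin
      (mem_sphere_zero_iff_norm.mp hx) (lt_min hr one_pos) (min_le_right r 1)).trans
    (measure_mono (inter_subset_inter_right _ (ball_subset_ball (min_le_left r 1))))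

theorem dist_le_of_mem_sphN_inter_ball {N : ℕ} {x θ σ : EuclideanSpace ℝ (Fin (N + 1))}
    {r : ℝ} (hθ : θ ∈ sphN N ∩ ball x r) (hσ : σ ∈ sphN N ∩ ball x r) :
    dist θ σ ≤ 2 * min r 1 := by
  rw [mul_min_of_nonneg _ _ zero_le_two, mul_one]
  refine le_min ?_ ?_
  · linarith [dist_triangle_right θ σ x, mem_ball.mp hθ.2, mem_ball.mp hσ.2]
  · linarith [dist_triangle_right θ σ 0, mem_sphere.mp hθ.1, mem_sphere.mp hσ.1]

theorem setLAverage_setLAverage_sphN_inter_ball_le {N : ℕ} (hN : 1 ≤ N)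
    {x : EuclideanSpace ℝ (Fin (N + 1))} (hx : x ∈ sphN N) {r : ℝ} (hr : 0 < r)
    (h : EuclideanSpace ℝ (Fin (N + 1)) → EuclideanSpace ℝ (Fin (N + 1)) → ℝ≥0∞) :
    ⨍⁻ θ in sphN N ∩ ball x r, ⨍⁻ σ in sphN N ∩ ball x r, h θ σ ∂surf N ∂surf N ≤
      ENNReal.ofReal ((4 * N) ^ N) * ∫⁻ θ in sphN N, ∫⁻ σ in sphN N,
        h θ σ / ENNReal.ofReal (dist θ σ ^ (2 * N : ℝ)) ∂surf N ∂surf N := by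
  set s := min r 1
  have hs : 0 < s := lt_min hr one_pos
  have hN' : (0 : ℝ) < N := by exact_mod_cast hN
  refine (setLAverage_setLAverage_le_of_dist_le (A := sphN N ∩ ball x r) (e := 2 * N) _
    (isClosed_sphere.measurableSet.inter measurableSet_ball) inter_subset_left
    (by positivity : 0 < 2 * s) (by positivity)
    (fun θ hθ σ hσ => dist_le_of_mem_sphN_inter_ball hθ hσ) h).trans (mul_le_mul_left ?_ _)
  have hratio : (2 * s) ^ (2 * N : ℝ) / ((s / √N) ^ N) ^ 2 = (4 * N) ^ N := by
    rw [show (2 * N : ℝ) = ((2 * N : ℕ) : ℝ) by push_cast; ring, Real.rpow_natCast, pow_mul,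
      ← pow_mul (s / √N), mul_comm N 2, pow_mul (s / √N), ← div_pow, div_pow s,
      Real.sq_sqrt hN'.le]
    congr 1
    field_simp
    ring
  calc ENNReal.ofReal ((2 * s) ^ (2 * N : ℝ)) / surf N (sphN N ∩ ball x r) ^ 2
      ≤ ENNReal.ofReal ((2 * s) ^ (2 * N : ℝ)) / ENNReal.ofReal ((s / √N) ^ N) ^ 2 := by
        gcongr
        exact ofReal_le_surf_sphN_inter_ball hN hx hr
    _ = ENNReal.ofReal ((4 * N) ^ N) := by
        rw [← ENNReal.ofReal_pow (by positivity), ← ENNReal.ofReal_div_of_pos (by positivity),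
          hratio]

/-- The BMO seminorm on the sphere is controlled by the critical Gagliardo seminorm
`[f]_{W^{β,N/β}(S^N)}`. -/
theorem bmo_le_gagliardo (N : ℕ) (hN : 1 ≤ N) (β : ℝ) (hβ0 : 0 < β) (hβ1 : β < 1) :
    ∃ C > (0 : ℝ), ∀ (M : ℕ), 1 ≤ M →
      ∀ f : EuclideanSpace ℝ (Fin (N + 1)) → EuclideanSpace ℝ (Fin M), Measurable f →
        bmoSem N M f ≤ ENNReal.ofReal C * gagliardoS N M β ((N : ℝ) / β) f := by
  have hN' : (1 : ℝ) ≤ N := by exact_mod_cast hN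
  have hp : 1 ≤ (N : ℝ) / β := by rw [le_div_iff₀ hβ0]; linarith
  have hexp : (N : ℝ) + β * (N / β) = 2 * N := by field_simp; ring
  have hC : ENNReal.ofReal ((4 * N) ^ N) ^ (1 / (N / β)) = ENNReal.ofReal ((4 * N) ^ β) := by
    rw [ENNReal.ofReal_rpow_of_nonneg (by positivity) (by positivity), ← Real.rpow_natCast,
      ← Real.rpow_mul (by positivity)]
    field_simp
  refine ⟨(4 * N) ^ β, by positivity, fun M _ f _ => ?_⟩
  refine iSup₂_le fun x hx => iSup₂_le fun r hr => ?_
  set A := sphN N ∩ ball x r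
  calc ⨍⁻ θ in A, ⨍⁻ σ in A, ENNReal.ofReal ‖f θ - f σ‖ ∂surf N ∂surf N
      ≤ (⨍⁻ θ in A, ⨍⁻ σ in A, ENNReal.ofReal ‖f θ - f σ‖ ^ (N / β) ∂surf N ∂surf N) ^
          (1 / (N / β)) :=
        laverage_laverage_le_rpow_laverage_laverage_rpow _ _ _ hp
    _ ≤ (ENNReal.ofReal ((4 * N) ^ N) * ∫⁻ θ in sphN N, ∫⁻ σ in sphN N,
          ENNReal.ofReal ‖f θ - f σ‖ ^ (N / β) / ENNReal.ofReal (dist θ σ ^ (2 * N : ℝ))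
            ∂surf N ∂surf N) ^ (1 / (N / β)) := by
        gcongr
        exact setLAverage_setLAverage_sphN_inter_ball_le hN hx hr _
    _ = ENNReal.ofReal ((4 * N) ^ β) * gagliardoS N M β (N / β) f := by
        rw [ENNReal.mul_rpow_of_nonneg _ _ (by positivity), hC, gagliardoS, hexp]
end
end

section
/- Let N ≥ 1 and M ≥ 1 be integers and let 0 < γ < β ≤ 1. For every bounded measurable map h : ℝ^N → ℝ^M one has the interpolation inequality [h]_{W^{γ,N/γ}(ℝ^N)} ≤ (2‖h‖_{L^∞(ℝ^N)})^{1−γ/β} · [h]_{W^{β,N/β}(ℝ^N)}^{γ/β} (the inequality understood in [0,∞]). -/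
open MeasureTheory Metric Set ENNReal

noncomputable section

/-- The Gagliardo seminorm `[h]_{W^{β,p}(ℝ^N)}`, with values in `[0,∞]`. -/
def gagliardoE (N M : ℕ) (β p : ℝ)
    (h : EuclideanSpace ℝ (Fin N) → EuclideanSpace ℝ (Fin M)) : ℝ≥0∞ :=
  (∫⁻ x, ∫⁻ y,
      ENNReal.ofReal ‖h x - h y‖ ^ p / ENNReal.ofReal (dist x y ^ ((N : ℝ) + β * p))) ^ (1 / p)

/-!
Since `|h(x) - h(y)| ≤ 2‖h‖_∞` for almost every pair, `|h(x) - h(y)|^{N/γ}` is at most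
`(2‖h‖_∞)^{N/γ - N/β} |h(x) - h(y)|^{N/β}`, and at the critical exponents both seminorms are
taken against the same kernel `|x - y|^{-2N}`. Integrating and taking `γ/N`-th powers gives the
inequality.
-/

namespace ENNReal

theorem rpow_le_rpow_sub_mul_rpow {a K : ℝ≥0∞} {p q : ℝ} (haK : a ≤ K) (hqp : q ≤ p)
    (hq : 0 ≤ q) : a ^ p ≤ K ^ (p - q) * a ^ q := by
  calc a ^ p = a ^ (p - q) * a ^ q := by
        rw [← rpow_add_of_nonneg _ _ (sub_nonneg.2 hqp) hq, sub_add_cancel]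
    _ ≤ K ^ (p - q) * a ^ q := by gcongr

theorem rpow_sub_mul_rpow_one_div {p q : ℝ} (hp : 0 < p) (hq : q ≠ 0) (K J : ℝ≥0∞) :
    (K ^ (p - q) * J) ^ (1 / p) = K ^ (1 - q / p) * (J ^ (1 / q)) ^ (q / p) := by
  rw [mul_rpow_of_nonneg _ _ (by positivity), ← rpow_mul, ← rpow_mul]
  congr 2 <;> field_simp

end ENNReal

section DoubleEnergy

variable {α E : Type*} [MeasurableSpace α] [NormedAddCommGroup E]

theorem ae_ae_ofReal_norm_sub_le (μ : Measure α) (h : α → E) :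
    ∀ᵐ x ∂μ, ∀ᵐ y ∂μ, ENNReal.ofReal ‖h x - h y‖ ≤ 2 * eLpNorm h ⊤ μ := by
  have hb : ∀ᵐ x ∂μ, ‖h x‖ₑ ≤ eLpNorm h ⊤ μ := by
    rw [eLpNorm_exponent_top]
    exact ae_le_eLpNormEssSup
  filter_upwards [hb] with x hx
  filter_upwards [hb] with y hy
  calc ENNReal.ofReal ‖h x - h y‖ = ‖h x - h y‖ₑ := ofReal_norm _
    _ ≤ ‖h x‖ₑ + ‖h y‖ₑ := enorm_sub_le
    _ ≤ 2 * eLpNorm h ⊤ μ := by rw [two_mul]; exact add_le_add hx hy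

variable [PseudoMetricSpace α]

def doubleEnergy (μ : Measure α) (s p : ℝ) (h : α → E) : ℝ≥0∞ :=
  ∫⁻ x, ∫⁻ y, ENNReal.ofReal ‖h x - h y‖ ^ p / ENNReal.ofReal (dist x y ^ s) ∂μ ∂μ

theorem doubleEnergy_le_mul_doubleEnergy (μ : Measure α) (s : ℝ) {p q : ℝ} (hqp : q ≤ p)
    (hq : 0 ≤ q) {h : α → E} (hh : eLpNorm h ⊤ μ ≠ ∞) :
    doubleEnergy μ s p h ≤ (2 * eLpNorm h ⊤ μ) ^ (p - q) * doubleEnergy μ s q h := by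
  have hC : (2 * eLpNorm h ⊤ μ) ^ (p - q) ≠ ∞ :=
    rpow_ne_top_of_nonneg (sub_nonneg.2 hqp) (mul_ne_top ofNat_ne_top hh)
  rw [doubleEnergy, doubleEnergy, ← lintegral_const_mul' _ _ hC]
  refine lintegral_mono_ae ?_
  filter_upwards [ae_ae_ofReal_norm_sub_le μ h] with x hx
  rw [← lintegral_const_mul' _ _ hC]
  refine lintegral_mono_ae ?_
  filter_upwards [hx] with y hy
  rw [← mul_div_assoc]
  gcongr
  exact rpow_le_rpow_sub_mul_rpow hy hqp hq

end DoubleEnergy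

theorem gagliardoE_div_eq_doubleEnergy {N M : ℕ} {β : ℝ} (hβ : β ≠ 0)
    (h : EuclideanSpace ℝ (Fin N) → EuclideanSpace ℝ (Fin M)) :
    gagliardoE N M β (N / β) h = doubleEnergy volume (2 * N) (N / β) h ^ (1 / (N / β : ℝ)) := by
  rw [gagliardoE, doubleEnergy, mul_div_cancel₀ _ hβ, ← two_mul]

theorem gagliardo_interpolation_general (N M : ℕ) (hN : 1 ≤ N)
    (γ β : ℝ) (hγ : 0 < γ) (hγβ : γ < β)
    (h : EuclideanSpace ℝ (Fin N) → EuclideanSpace ℝ (Fin M))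
    (hbd : ∃ R : ℝ, ∀ x, ‖h x‖ ≤ R) :
    gagliardoE N M γ ((N : ℝ) / γ) h ≤
      (2 * eLpNorm h ⊤ volume) ^ (1 - γ / β) *
        gagliardoE N M β ((N : ℝ) / β) h ^ (γ / β) := by
  obtain ⟨R, hR⟩ := hbd
  have hβ : 0 < β := hγ.trans hγβ
  have hN0 : (0 : ℝ) < N := by exact_mod_cast hN
  have hh : eLpNorm h ⊤ volume ≠ ∞ := by
    rw [eLpNorm_exponent_top]
    exact (eLpNormEssSup_lt_top_of_ae_bound (ae_of_all _ hR)).ne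
  have hqp : (N : ℝ) / β ≤ N / γ := div_le_div_of_nonneg_left hN0.le hγ hγβ.le
  have hratio : (N / β) / (N / γ) = γ / β := by field_simp
  rw [gagliardoE_div_eq_doubleEnergy hγ.ne', gagliardoE_div_eq_doubleEnergy hβ.ne', ← hratio,
    ← rpow_sub_mul_rpow_one_div (by positivity) (by positivity)]
  gcongr
  exact doubleEnergy_le_mul_doubleEnergy volume _ hqp (by positivity) hh

/-- Interpolation of critical Gagliardo seminorms:
`[h]_{W^{γ,N/γ}} ≤ (2‖h‖_∞)^{1-γ/β} [h]_{W^{β,N/β}}^{γ/β}` for `0 < γ < β ≤ 1`. -/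
theorem gagliardo_interpolation (N M : ℕ) (hN : 1 ≤ N) (hM : 1 ≤ M)
    (γ β : ℝ) (hγ : 0 < γ) (hγβ : γ < β) (hβ : β ≤ 1)
    (h : EuclideanSpace ℝ (Fin N) → EuclideanSpace ℝ (Fin M))
    (hmeas : Measurable h) (hbd : ∃ R : ℝ, ∀ x, ‖h x‖ ≤ R) :
    gagliardoE N M γ ((N : ℝ) / γ) h ≤
      (2 * eLpNorm h ⊤ volume) ^ (1 - γ / β) *
        gagliardoE N M β ((N : ℝ) / β) h ^ (γ / β) :=
  gagliardo_interpolation_general N M hN γ β hγ hγβ h hbd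
end
end

section
/- Let M₀ ≥ 2 and M₁ ≥ 2 be real numbers. Define σ(α) := max{ M₀/(M₀+1) + max( 1/(M₀+1) − α/M₀ , 0 ), M₁/(M₁+1) + max( α/M₁ − 1/(M₁(M₁+1)) , 0 ) } for α ∈ (0,1). Then the infimum of σ(α) over α ∈ (0,1) equals (M₀ + M₁ − 1)/(M₀ + M₁) = 1 − 1/(M₀ + M₁), and it is attained at α = M₀/(M₀ + M₁). -/
open Set

/-- The function `σ(α)` arising in the main integral estimate. -/
noncomputable def sigmaThreshold (M₀ M₁ α : ℝ) : ℝ :=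
  max (M₀ / (M₀ + 1) + max (1 / (M₀ + 1) - α / M₀) 0)
    (M₁ / (M₁ + 1) + max (α / M₁ - 1 / (M₁ * (M₁ + 1))) 0)

/-! After clearing the positive parts, σ(α) is the maximum of the line `1 - α/M₀`, the line
`1 - (1-α)/M₁` and two constants. For every `α`, one of `α/M₀`, `(1-α)/M₁` is at most the
mediant `1/(M₀+M₁)`, so `σ ≥ 1 - 1/(M₀+M₁)`; at `α = M₀/(M₀+M₁)` both lines equal this value
and dominate the constants once `M₀, M₁ ≥ 1`. -/

lemma min_div_div_one_sub_le_one_div_add {a b : ℝ} (ha : 0 < a) (hb : 0 < b) (α : ℝ) :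
    min (α / a) ((1 - α) / b) ≤ 1 / (a + b) := by
  by_contra! h
  rw [lt_min_iff, div_lt_div_iff₀ (by positivity) ha, div_lt_div_iff₀ (by positivity) hb] at h
  linarith [h.1, h.2]

lemma sigmaThreshold_eq_max {M₀ M₁ : ℝ} (hM₀ : 0 < M₀) (hM₁ : 0 < M₁) (α : ℝ) :
    sigmaThreshold M₀ M₁ α =
      max (max (1 - α / M₀) (M₀ / (M₀ + 1))) (max (1 - (1 - α) / M₁) (M₁ / (M₁ + 1))) := by
  have h₀ : M₀ / (M₀ + 1) + (1 / (M₀ + 1) - α / M₀) = 1 - α / M₀ := by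
    field_simp; ring
  have h₁ : M₁ / (M₁ + 1) + (α / M₁ - 1 / (M₁ * (M₁ + 1))) = 1 - (1 - α) / M₁ := by
    field_simp; ring
  rw [sigmaThreshold, add_max, add_max, h₀, h₁, add_zero, add_zero]

lemma one_sub_one_div_add_le_sigmaThreshold {M₀ M₁ : ℝ} (hM₀ : 0 < M₀) (hM₁ : 0 < M₁)
    (α : ℝ) : 1 - 1 / (M₀ + M₁) ≤ sigmaThreshold M₀ M₁ α := by
  rw [sigmaThreshold_eq_max hM₀ hM₁]
  rcases min_le_iff.mp (min_div_div_one_sub_le_one_div_add hM₀ hM₁ α) with h | h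
  · exact le_max_of_le_left (le_max_of_le_left (by linarith))
  · exact le_max_of_le_right (le_max_of_le_left (by linarith))

lemma sigmaThreshold_div_add {M₀ M₁ : ℝ} (hM₀ : 1 ≤ M₀) (hM₁ : 1 ≤ M₁) :
    sigmaThreshold M₀ M₁ (M₀ / (M₀ + M₁)) = 1 - 1 / (M₀ + M₁) := by
  have hM₀' : 0 < M₀ := by linarith
  have hM₁' : 0 < M₁ := by linarith
  refine le_antisymm ?_ (one_sub_one_div_add_le_sigmaThreshold hM₀' hM₁' _)
  have hleft : 1 - M₀ / (M₀ + M₁) / M₀ = 1 - 1 / (M₀ + M₁) := by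
    field_simp
  have hright : 1 - (1 - M₀ / (M₀ + M₁)) / M₁ = 1 - 1 / (M₀ + M₁) := by
    field_simp; ring
  have hconst {M : ℝ} (hM : 0 < M) (hle : M + 1 ≤ M₀ + M₁) :
      M / (M + 1) ≤ 1 - 1 / (M₀ + M₁) := by
    have hM1 : M / (M + 1) = 1 - 1 / (M + 1) := by field_simp; ring
    rw [hM1]
    exact sub_le_sub_left (one_div_le_one_div_of_le (by linarith) hle) 1
  rw [sigmaThreshold_eq_max hM₀' hM₁', hleft, hright]
  exact max_le (max_le le_rfl (hconst hM₀' (by linarith)))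
    (max_le le_rfl (hconst hM₁' (by linarith)))

/-- `inf_{α ∈ (0,1)} σ(α) = (M₀+M₁-1)/(M₀+M₁) = 1 - 1/(M₀+M₁)`, attained at
`α = M₀/(M₀+M₁)`. -/
theorem sigma_inf_eq (M₀ M₁ : ℝ) (hM₀ : 2 ≤ M₀) (hM₁ : 2 ≤ M₁) :
    sInf (sigmaThreshold M₀ M₁ '' Set.Ioo (0 : ℝ) 1) = (M₀ + M₁ - 1) / (M₀ + M₁) ∧
    (M₀ + M₁ - 1) / (M₀ + M₁) = 1 - 1 / (M₀ + M₁) ∧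
    M₀ / (M₀ + M₁) ∈ Set.Ioo (0 : ℝ) 1 ∧
    sigmaThreshold M₀ M₁ (M₀ / (M₀ + M₁)) = (M₀ + M₁ - 1) / (M₀ + M₁) := by
  have hM₀' : 0 < M₀ := by linarith
  have hM₁' : 0 < M₁ := by linarith
  have hform : (M₀ + M₁ - 1) / (M₀ + M₁) = 1 - 1 / (M₀ + M₁) := by
    field_simp
  have hmem : M₀ / (M₀ + M₁) ∈ Set.Ioo (0 : ℝ) 1 :=
    ⟨by positivity, (div_lt_one (by positivity)).mpr (by linarith)⟩
  have hval := sigmaThreshold_div_add (M₀ := M₀) (M₁ := M₁) (by linarith) (by linarith)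
  rw [hform]
  refine ⟨IsLeast.csInf_eq ⟨⟨_, hmem, hval⟩, ?_⟩, rfl, hmem, hval⟩
  exact forall_mem_image.mpr fun α _ => one_sub_one_div_add_le_sigmaThreshold hM₀' hM₁' α
end
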